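/- If (M_k)_{k∈ℕ} is a sequence of microscopic subsets of ℝ, then ⋃_{k∈ℕ} M_k is microscopic; hence 𝓜 is a σ-ideal of subsets of ℝ. -/
import Mathlib


open MeasureTheory Filter

/-- `S ⊆ ℝ` is an interval. -/
def IsIntervalSet (S : Set ℝ) : Prop := S.OrdConnected

/-- A set `M ⊆ ℝ` is microscopic if for each `ε > 0` there is a sequence of intervals
`(J n)` covering `M` with `|J n| ≤ ε ^ (n + 1)` for each `n`. -/
def Microscopic (M : Set ℝ) : Prop :=
  ∀ ε : ℝ, 0 < ε → ∃ J : ℕ → Set ℝ,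
    (∀ n, IsIntervalSet (J n)) ∧ M ⊆ (⋃ n, J n) ∧
      ∀ n, volume (J n) ≤ ENNReal.ofReal (ε ^ (n + 1))

lemma fact2_aux (k n : ℕ) : (2 ^ k * (2 * n + 1)).factorization 2 = k := by
  rw [Nat.factorization_mul (by positivity) (by omega)]
  have h1 : ((2 * n + 1).factorization) 2 = 0 :=
    Nat.factorization_eq_zero_of_not_dvd (by omega)
  simp [Nat.Prime.factorization_pow, Nat.prime_two, h1]

theorem microscopic_iUnion (M : ℕ → Set ℝ) (hM : ∀ k, Microscopic (M k)) :
    Microscopic (⋃ k, M k) := by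
  intro ε hε
  set δ : ℝ := min ε (1 / 2) with hδdef
  have hδ0 : 0 < δ := lt_min hε (by norm_num)
  have hδ1 : δ ≤ 1 := le_trans (min_le_right _ _) (by norm_num)
  have hδε : δ ≤ ε := min_le_left _ _
  choose J hJint hJcov hJvol using fun k => hM k (δ ^ (2 ^ (k + 1))) (by positivity)
  refine ⟨fun m => J ((m + 1).factorization 2)
      (((m + 1) / 2 ^ ((m + 1).factorization 2) - 1) / 2), fun m => hJint _ _, ?_, ?_⟩
  · apply Set.iUnion_subset
    intro k
    refine (hJcov k).trans (Set.iUnion_subset fun n => ?_)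
    have hpos : 1 ≤ 2 ^ k * (2 * n + 1) := Nat.one_le_iff_ne_zero.2 (by positivity)
    have hm : (2 ^ k * (2 * n + 1) - 1) + 1 = 2 ^ k * (2 * n + 1) := by omega
    have hK : J ((2 ^ k * (2 * n + 1) - 1 + 1).factorization 2)
        (((2 ^ k * (2 * n + 1) - 1 + 1) / 2 ^ ((2 ^ k * (2 * n + 1) - 1 + 1).factorization 2) - 1) / 2)
        = J k n := by
      rw [hm, fact2_aux k n, Nat.mul_div_cancel_left _ (by positivity : 0 < 2 ^ k)]
      have h2 : (2 * n + 1 - 1) / 2 = n := by omega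
      rw [h2]
    intro x hx
    exact Set.mem_iUnion.2 ⟨2 ^ k * (2 * n + 1) - 1, hK ▸ hx⟩
  · intro m
    obtain ⟨k, o, hk, ho⟩ : ∃ k o : ℕ, k = (m + 1).factorization 2 ∧
        o = (m + 1) / 2 ^ ((m + 1).factorization 2) := ⟨_, _, rfl, rfl⟩
    beta_reduce
    rw [← hk] at ho ⊢
    rw [← ho]
    have hsplit : 2 ^ k * o = m + 1 := by
      rw [hk, ho, hk]; exact Nat.ordProj_mul_ordCompl_eq_self (m + 1) 2
    have hodd : ¬ 2 ∣ o := by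
      rw [ho, hk]; exact Nat.not_dvd_ordCompl Nat.prime_two (by omega)
    have ho0 : o ≠ 0 := by rintro h; rw [h, mul_zero] at hsplit; omega
    obtain ⟨n, hoeq⟩ : ∃ n, o = 2 * n + 1 := ⟨(o - 1) / 2, by omega⟩
    have hn : (o - 1) / 2 = n := by omega
    rw [hn]
    have hle : m + 1 ≤ 2 ^ (k + 1) * (n + 1) := by
      have : 2 ^ (k + 1) * (n + 1) = 2 ^ k * (2 * n + 2) := by ring
      rw [this]
      calc m + 1 = 2 ^ k * o := hsplit.symm
        _ ≤ 2 ^ k * (2 * n + 2) := by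
            apply Nat.mul_le_mul_left; omega
    calc volume (J k n) ≤ ENNReal.ofReal ((δ ^ 2 ^ (k + 1)) ^ (n + 1)) := hJvol k n
      _ ≤ ENNReal.ofReal (ε ^ (m + 1)) := by
          apply ENNReal.ofReal_le_ofReal
          rw [← pow_mul]
          calc δ ^ (2 ^ (k + 1) * (n + 1)) ≤ δ ^ (m + 1) :=
                pow_le_pow_of_le_one hδ0.le hδ1 hle
            _ ≤ ε ^ (m + 1) := pow_le_pow_left₀ hδ0.le hδε _
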